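/- Let (X, X⁺) be a pre-ordered Banach space and let (j, F) be a free Banach lattice over (X, X⁺). If Bₓ*⁺ is norming for X, i.e. ‖x‖ = sup_{x* ∈ Bₓ*⁺} |x*(x)| for every x ∈ X, then j is isometric: ‖j(x)‖ = ‖x‖ for all x ∈ X. In particular, when X⁺ = {0}, j is isometric. -/

import Mathlib

/-!
Every `g` in the positive dual ball is a positive contraction into the Banach lattice `ℝ`, so it
factors as `g = ψ ∘ j` with `ψ` contractive; hence `|g x| ≤ ‖j x‖`, and taking the supremum over
`g` gives `‖x‖ ≤ ‖j x‖`, while `‖j x‖ ≤ ‖x‖` because `j` is a contraction. When `X⁺ = {0}` every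
functional is positive, and Hahn–Banach makes the dual ball norming.
-/

/-- A wedge in a real vector space. -/
def IsWedge {V : Type} [AddCommGroup V] [Module ℝ V] (C : Set V) : Prop :=
  0 ∈ C ∧ ∀ (a b : ℝ) (x y : V), 0 ≤ a → 0 ≤ b → x ∈ C → y ∈ C → a • x + b • y ∈ C

/-- The positive part of the dual unit ball of the pre-ordered Banach space `(X, C)`:
continuous linear functionals of norm at most 1 that are nonnegative on `C`. -/
def PosDualBall {X : Type} [NormedAddCommGroup X] [NormedSpace ℝ X] (C : Set X)
    (f : X →L[ℝ] ℝ) : Prop :=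
  ‖f‖ ≤ 1 ∧ ∀ x ∈ C, 0 ≤ f x

/-- `(j, F)` is a free Banach lattice over the pre-ordered Banach space `(X, C)`:
`j` is a positive contraction, and every positive contraction from `X` into a Banach
lattice factors uniquely through `j` via a contractive vector lattice homomorphism. -/
def IsFreeBanachLattice (X : Type) [NormedAddCommGroup X] [NormedSpace ℝ X]
    [CompleteSpace X] (C : Set X)
    (F : Type) [NormedAddCommGroup F] [Lattice F] [HasSolidNorm F] [IsOrderedAddMonoid F] [NormedSpace ℝ F] [CompleteSpace F]
    (j : X →L[ℝ] F) : Prop :=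
  ‖j‖ ≤ 1 ∧ (∀ x ∈ C, 0 ≤ j x) ∧
  ∀ (G : Type) [NormedAddCommGroup G] [Lattice G] [HasSolidNorm G] [IsOrderedAddMonoid G] [NormedSpace ℝ G] [CompleteSpace G],
    ∀ φ : X →L[ℝ] G, ‖φ‖ ≤ 1 → (∀ x ∈ C, 0 ≤ φ x) →
      ∃! ψ : F →L[ℝ] G, ‖ψ‖ ≤ 1 ∧ (∀ a b : F, ψ (a ⊔ b) = ψ a ⊔ ψ b) ∧
        ∀ x : X, ψ (j x) = φ x

theorem ContinuousLinearMap.norm_apply_le_of_opNorm_le_one {𝕜 E F : Type*}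
    [NontriviallyNormedField 𝕜] [SeminormedAddCommGroup E] [SeminormedAddCommGroup F]
    [NormedSpace 𝕜 E] [NormedSpace 𝕜 F] (f : E →L[𝕜] F) (hf : ‖f‖ ≤ 1) (x : E) :
    ‖f x‖ ≤ ‖x‖ :=
  (f.le_of_opNorm_le hf x).trans_eq (one_mul _)

section PosDualBall

variable {X : Type} [NormedAddCommGroup X] [NormedSpace ℝ X] {C : Set X}

theorem PosDualBall.abs_apply_le {g : X →L[ℝ] ℝ} (hg : PosDualBall C g) (x : X) :
    |g x| ≤ ‖x‖ :=
  g.norm_apply_le_of_opNorm_le_one hg.1 x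

theorem sSup_abs_posDualBall_eq_norm_of_subset_zero (hC : C ⊆ {0}) (x : X) :
    sSup {r : ℝ | ∃ g : X →L[ℝ] ℝ, PosDualBall C g ∧ r = |g x|} = ‖x‖ := by
  obtain ⟨g, hg, hgx⟩ := exists_dual_vector'' ℝ x
  have hgC : PosDualBall C g := ⟨hg, fun y hy => by simp [Set.mem_singleton_iff.1 (hC hy)]⟩
  refine IsGreatest.csSup_eq ⟨⟨g, hgC, by simp [hgx]⟩, ?_⟩
  rintro _ ⟨g', hg', rfl⟩
  exact hg'.abs_apply_le x

end PosDualBall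

namespace IsFreeBanachLattice

variable {X : Type} [NormedAddCommGroup X] [NormedSpace ℝ X] [CompleteSpace X] {C : Set X}
  {F : Type} [NormedAddCommGroup F] [Lattice F] [HasSolidNorm F] [IsOrderedAddMonoid F]
  [NormedSpace ℝ F] [CompleteSpace F] {j : X →L[ℝ] F}

theorem norm_apply_le (hfree : IsFreeBanachLattice X C F j) (x : X) : ‖j x‖ ≤ ‖x‖ :=
  j.norm_apply_le_of_opNorm_le_one hfree.1 x

theorem abs_apply_le_norm_apply (hfree : IsFreeBanachLattice X C F j) {g : X →L[ℝ] ℝ}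
    (hg : PosDualBall C g) (x : X) : |g x| ≤ ‖j x‖ := by
  obtain ⟨ψ, ⟨hψ, -, hψj⟩, -⟩ := hfree.2.2 ℝ g hg.1 hg.2
  calc |g x| = ‖ψ (j x)‖ := by rw [hψj, Real.norm_eq_abs]
    _ ≤ ‖j x‖ := ψ.norm_apply_le_of_opNorm_le_one hψ _

theorem norm_apply_eq_of_norming (hfree : IsFreeBanachLattice X C F j)
    (hnorm : ∀ x : X, ‖x‖ = sSup {r : ℝ | ∃ g : X →L[ℝ] ℝ, PosDualBall C g ∧ r = |g x|})
    (x : X) : ‖j x‖ = ‖x‖ := by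
  refine le_antisymm (hfree.norm_apply_le x) ((hnorm x).trans_le (Real.sSup_le ?_ (norm_nonneg _)))
  rintro _ ⟨g, hg, rfl⟩
  exact hfree.abs_apply_le_norm_apply hg x

end IsFreeBanachLattice

theorem free_banach_lattice_isometric_of_norming_general
    (X : Type) [NormedAddCommGroup X] [NormedSpace ℝ X] [CompleteSpace X]
    (C : Set X)
    (F : Type) [NormedAddCommGroup F] [Lattice F] [HasSolidNorm F] [IsOrderedAddMonoid F] [NormedSpace ℝ F] [CompleteSpace F]
    (j : X →L[ℝ] F) (hfree : IsFreeBanachLattice X C F j) :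
    ((∀ x : X, ‖x‖ = sSup {r : ℝ | ∃ g : X →L[ℝ] ℝ, PosDualBall C g ∧ r = |g x|}) →
      ∀ x : X, ‖j x‖ = ‖x‖) ∧
    (C = {0} → ∀ x : X, ‖j x‖ = ‖x‖) :=
  ⟨hfree.norm_apply_eq_of_norming, fun hC0 => hfree.norm_apply_eq_of_norming fun x =>
    (sSup_abs_posDualBall_eq_norm_of_subset_zero hC0.subset x).symm⟩

/-- For a free Banach lattice `(j, F)` over a pre-ordered Banach space `(X, X⁺)`: if the
positive part of the dual unit ball is norming for `X`, then `j` is isometric; in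
particular this is the case when `X⁺ = {0}`. -/
theorem free_banach_lattice_isometric_of_norming
    (X : Type) [NormedAddCommGroup X] [NormedSpace ℝ X] [CompleteSpace X]
    (C : Set X) (hC : IsWedge C)
    (F : Type) [NormedAddCommGroup F] [Lattice F] [HasSolidNorm F] [IsOrderedAddMonoid F] [NormedSpace ℝ F] [CompleteSpace F]
    (j : X →L[ℝ] F) (hfree : IsFreeBanachLattice X C F j) :
    ((∀ x : X, ‖x‖ = sSup {r : ℝ | ∃ g : X →L[ℝ] ℝ, PosDualBall C g ∧ r = |g x|}) →
      ∀ x : X, ‖j x‖ = ‖x‖) ∧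
    (C = {0} → ∀ x : X, ‖j x‖ = ‖x‖) :=
  free_banach_lattice_isometric_of_norming_general X C F j hfree
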